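/- arXiv:1612.06061 — 3 statements merged into one kernel-verified Lean document; each statement's English description precedes it below -/
import Mathlib

section
/- Let Z_1,...,Z_p be random variables with 0 < z_min ≤ Z_i ≤ 1 almost surely for all i, where z_min ∈ (0,1). Then E[∏_{i=1}^p Z_i] ≥ (∏_{i=1}^p E[Z_i])^{1/z_min}. -/
/-!
Since `log E[Zᵢ] ≤ E[Zᵢ] - 1` and `(z - 1) / zmin ≤ 1 - 1/z ≤ log z` on `[zmin, 1]`, each factor
satisfies `log E[Zᵢ] / zmin ≤ E[log Zᵢ]`. Summing over `i` bounds `log (∏ E[Zᵢ]) / zmin` by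
`E[log ∏ Zᵢ]`, and Jensen's inequality for `exp` gives `exp E[log ∏ Zᵢ] ≤ E[∏ Zᵢ]`.
-/

open MeasureTheory Real

lemma Real.sub_one_div_le_log {m x : ℝ} (hm : 0 < m) (hmx : m ≤ x) (hx : x ≤ 1) :
    (x - 1) / m ≤ log x := by
  have hx0 : 0 < x := hm.trans_le hmx
  calc (x - 1) / m ≤ (x - 1) / x := by
        rw [div_le_div_iff₀ hm hx0]
        nlinarith
    _ = 1 - x⁻¹ := by field_simp
    _ ≤ log x := one_sub_inv_le_log_of_pos hx0

section

variable {Ω : Type*} [MeasurableSpace Ω] {μ : Measure Ω}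

lemma exp_integral_log_le_integral [IsProbabilityMeasure μ] {X : Ω → ℝ}
    (hX : Integrable X μ) (hlog : Integrable (fun ω => log (X ω)) μ)
    (hpos : ∀ᵐ ω ∂μ, 0 < X ω) :
    exp (∫ ω, log (X ω) ∂μ) ≤ ∫ ω, X ω ∂μ := by
  have hexp_log : (fun ω => exp (log (X ω))) =ᵐ[μ] X := by
    filter_upwards [hpos] with ω hω using exp_log hω
  calc exp (∫ ω, log (X ω) ∂μ) ≤ ∫ ω, exp (log (X ω)) ∂μ :=
        convexOn_exp.map_integral_le continuous_exp.continuousOn isClosed_univ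
          (.of_forall fun _ => Set.mem_univ _) hlog (hX.congr hexp_log.symm)
    _ = ∫ ω, X ω ∂μ := integral_congr_ae hexp_log

variable {X : Ω → ℝ} {m : ℝ}

lemma const_le_integral [IsProbabilityMeasure μ] (hX : Integrable X μ) (hm : ∀ᵐ ω ∂μ, m ≤ X ω) :
    m ≤ ∫ ω, X ω ∂μ := by
  simpa using integral_mono_ae (integrable_const m) hX hm

lemma integrable_log_of_ae_mem_Icc [IsFiniteMeasure μ] (hX : AEMeasurable X μ) (hm : 0 < m)
    (hb : ∀ᵐ ω ∂μ, X ω ∈ Set.Icc m 1) :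
    Integrable (fun ω => log (X ω)) μ :=
  .of_mem_Icc (log m) 0 (measurable_log.comp_aemeasurable hX) <| by
    filter_upwards [hb] with ω ⟨hmX, hX1⟩
    exact ⟨log_le_log hm hmX, log_nonpos (hm.le.trans hmX) hX1⟩

lemma log_integral_div_le_integral_log [IsProbabilityMeasure μ] (hX : AEMeasurable X μ)
    (hm : 0 < m) (hb : ∀ᵐ ω ∂μ, X ω ∈ Set.Icc m 1) :
    log (∫ ω, X ω ∂μ) / m ≤ ∫ ω, log (X ω) ∂μ := by
  have hXint : Integrable X μ := .of_mem_Icc m 1 hX hb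
  have hmean : m ≤ ∫ ω, X ω ∂μ := const_le_integral hXint (by
    filter_upwards [hb] with ω hω using hω.1)
  calc log (∫ ω, X ω ∂μ) / m ≤ (∫ ω, X ω ∂μ - 1) / m :=
        div_le_div_of_nonneg_right (log_le_sub_one_of_pos (hm.trans_le hmean)) hm.le
    _ = ∫ ω, (X ω - 1) / m ∂μ := by
        rw [integral_div, integral_sub hXint (integrable_const 1)]
        simp
    _ ≤ ∫ ω, log (X ω) ∂μ :=
        integral_mono_ae ((hXint.sub (integrable_const 1)).div_const m)
          (integrable_log_of_ae_mem_Icc hX hm hb) (by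
            filter_upwards [hb] with ω hω using sub_one_div_le_log hm hω.1 hω.2)

variable {ι : Type*} [Fintype ι] {Z : ι → Ω → ℝ}

lemma ae_prod_mem_Icc (hm : 0 ≤ m) (hb : ∀ i, ∀ᵐ ω ∂μ, Z i ω ∈ Set.Icc m 1) :
    ∀ᵐ ω ∂μ, ∏ i, Z i ω ∈ Set.Icc (m ^ Fintype.card ι) 1 := by
  filter_upwards [ae_all_iff.2 hb] with ω hω
  refine ⟨?_, Finset.prod_le_one (fun i _ => hm.trans (hω i).1) fun i _ => (hω i).2⟩
  calc m ^ Fintype.card ι = ∏ _ : ι, m := by simp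
    _ ≤ ∏ i, Z i ω := Finset.prod_le_prod (fun _ _ => hm) fun i _ => (hω i).1

lemma sum_log_integral_div_le_integral_log_prod [IsProbabilityMeasure μ]
    (hZ : ∀ i, AEMeasurable (Z i) μ) (hm : 0 < m) (hb : ∀ i, ∀ᵐ ω ∂μ, Z i ω ∈ Set.Icc m 1) :
    (∑ i, log (∫ ω, Z i ω ∂μ)) / m ≤ ∫ ω, log (∏ i, Z i ω) ∂μ := by
  have hlog_prod : (fun ω => log (∏ i, Z i ω)) =ᵐ[μ] fun ω => ∑ i, log (Z i ω) := by
    filter_upwards [ae_all_iff.2 hb] with ω hω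
    exact log_prod fun i _ => (hm.trans_le (hω i).1).ne'
  rw [integral_congr_ae hlog_prod,
    integral_finsetSum _ fun i _ => integrable_log_of_ae_mem_Icc (hZ i) hm (hb i), Finset.sum_div]
  exact Finset.sum_le_sum fun i _ => log_integral_div_le_integral_log (hZ i) hm (hb i)

end

theorem bar_product_expectation_lower_general
    {Ω : Type*} [MeasurableSpace Ω] (μ : Measure Ω) [IsProbabilityMeasure μ]
    (p : ℕ) (Z : Fin p → Ω → ℝ) (zmin : ℝ)
    (hzmin : 0 < zmin)
    (hmeas : ∀ i, Measurable (Z i))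
    (hbound : ∀ i, ∀ᵐ ω ∂μ, zmin ≤ Z i ω ∧ Z i ω ≤ 1) :
    (∏ i, ∫ ω, Z i ω ∂μ) ^ ((1 : ℝ) / zmin) ≤ ∫ ω, ∏ i, Z i ω ∂μ := by
  have hZ (i : Fin p) : AEMeasurable (Z i) μ := (hmeas i).aemeasurable
  have hmean_pos (i : Fin p) : 0 < ∫ ω, Z i ω ∂μ :=
    hzmin.trans_le <| const_le_integral (.of_mem_Icc zmin 1 (hZ i) (hbound i)) <| by
      filter_upwards [hbound i] with ω hω using hω.1
  have hprod := ae_prod_mem_Icc hzmin.le hbound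
  have hprod_meas : AEMeasurable (fun ω => ∏ i, Z i ω) μ :=
    Finset.aemeasurable_fun_prod _ fun i _ => hZ i
  calc (∏ i, ∫ ω, Z i ω ∂μ) ^ ((1 : ℝ) / zmin)
      = exp ((∑ i, log (∫ ω, Z i ω ∂μ)) / zmin) := by
        rw [rpow_def_of_pos (Finset.prod_pos fun i _ => hmean_pos i),
          log_prod fun i _ => (hmean_pos i).ne', mul_one_div]
    _ ≤ exp (∫ ω, log (∏ i, Z i ω) ∂μ) :=
        exp_le_exp.2 <| sum_log_integral_div_le_integral_log_prod hZ hzmin hbound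
    _ ≤ ∫ ω, ∏ i, Z i ω ∂μ :=
        exp_integral_log_le_integral (.of_mem_Icc _ _ hprod_meas hprod)
          (integrable_log_of_ae_mem_Icc hprod_meas (pow_pos hzmin _) hprod)
          (by filter_upwards [hprod] with ω hω using (pow_pos hzmin _).trans_le hω.1)

/-- If `Z 1, ..., Z p` are random variables on a probability space with
`0 < zmin ≤ Z i ≤ 1` almost surely (`zmin ∈ (0,1)`), then
`E[∏ Z i] ≥ (∏ E[Z i]) ^ (1/zmin)`. -/
theorem bar_product_expectation_lower
    {Ω : Type*} [MeasurableSpace Ω] (μ : Measure Ω) [IsProbabilityMeasure μ]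
    (p : ℕ) (Z : Fin p → Ω → ℝ) (zmin : ℝ)
    (hzmin : 0 < zmin) (hzmin1 : zmin < 1)
    (hmeas : ∀ i, Measurable (Z i))
    (hbound : ∀ i, ∀ᵐ ω ∂μ, zmin ≤ Z i ω ∧ Z i ω ≤ 1) :
    (∏ i, ∫ ω, Z i ω ∂μ) ^ ((1 : ℝ) / zmin) ≤ ∫ ω, ∏ i, Z i ω ∂μ :=
  bar_product_expectation_lower_general μ p Z zmin hzmin hmeas hbound
end

section
/- Let Z_1,...,Z_p be random variables with 1 ≤ Z_i ≤ z_max almost surely for all i, where z_max ≥ 1. Then E[∏_{i=1}^p Z_i] ≥ (∏_{i=1}^p E[Z_i])^{1/z_max}. -/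
/-!
Pointwise, `(z - 1) / M ≤ 1 - 1 / z ≤ log z` for `1 ≤ z ≤ M`; taking expectations and using
`log x ≤ x - 1` gives `log E[Zᵢ] / M ≤ E[log Zᵢ]`. Summing over `i` and applying Jensen's
inequality to `exp` yields `(∏ E[Zᵢ]) ^ (1 / M) ≤ exp (E[∑ log Zᵢ]) ≤ E[exp (∑ log Zᵢ)] = E[∏ Zᵢ]`.
-/

open MeasureTheory Real

lemma Real.sub_one_div_le_log_s1 {z M : ℝ} (hz : 1 ≤ z) (hzM : z ≤ M) : (z - 1) / M ≤ log z :=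
  calc (z - 1) / M ≤ (z - 1) / z := div_le_div_of_nonneg_left (by linarith) (by linarith) hzM
    _ = 1 - z⁻¹ := by field_simp
    _ ≤ log z := one_sub_inv_le_log_of_pos (by linarith)

namespace MeasureTheory

variable {Ω : Type*} [MeasurableSpace Ω] {μ : Measure Ω}

lemma exp_integral_le_integral_exp [IsProbabilityMeasure μ] {f : Ω → ℝ} (hf : Integrable f μ)
    (hexp : Integrable (fun ω ↦ exp (f ω)) μ) : exp (∫ ω, f ω ∂μ) ≤ ∫ ω, exp (f ω) ∂μ :=
  convexOn_exp.map_integral_le continuous_exp.continuousOn isClosed_univ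
    (.of_forall fun _ ↦ Set.mem_univ _) hf hexp

lemma exp_sum_integral_log_le_integral_prod [IsProbabilityMeasure μ] {ι : Type*} [Fintype ι]
    {X : ι → Ω → ℝ} (hpos : ∀ i, ∀ᵐ ω ∂μ, 0 < X i ω)
    (hlog : ∀ i, Integrable (fun ω ↦ log (X i ω)) μ) (hprod : Integrable (fun ω ↦ ∏ i, X i ω) μ) :
    exp (∑ i, ∫ ω, log (X i ω) ∂μ) ≤ ∫ ω, ∏ i, X i ω ∂μ := by
  have hexp_sum : (fun ω ↦ exp (∑ i, log (X i ω))) =ᵐ[μ] fun ω ↦ ∏ i, X i ω := by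
    filter_upwards [Filter.eventually_all.2 hpos] with ω hω
    rw [exp_sum]
    exact Finset.prod_congr rfl fun i _ ↦ exp_log (hω i)
  rw [← integral_finsetSum _ fun i _ ↦ hlog i, ← integral_congr_ae hexp_sum]
  exact exp_integral_le_integral_exp (integrable_finsetSum _ fun i _ ↦ hlog i)
    (hprod.congr hexp_sum.symm)

section BoundedAboveOne

variable {X : Ω → ℝ} {M : ℝ}

lemma integrable_of_ae_one_le_le [IsFiniteMeasure μ] (hX : AEStronglyMeasurable X μ)
    (hb : ∀ᵐ ω ∂μ, 1 ≤ X ω ∧ X ω ≤ M) : Integrable X μ :=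
  .of_bound hX M <| hb.mono fun ω h ↦ by
    rw [norm_eq_abs, abs_of_nonneg (by linarith [h.1])]
    exact h.2

lemma integrable_log_of_ae_one_le_le [IsFiniteMeasure μ] (hX : AEStronglyMeasurable X μ)
    (hb : ∀ᵐ ω ∂μ, 1 ≤ X ω ∧ X ω ≤ M) : Integrable (fun ω ↦ log (X ω)) μ :=
  .of_bound (measurable_log.comp_aemeasurable hX.aemeasurable).aestronglyMeasurable M <|
    hb.mono fun ω h ↦ by
      rw [norm_eq_abs, abs_of_nonneg (log_nonneg h.1)]
      linarith [log_le_sub_one_of_pos (by linarith [h.1] : 0 < X ω), h.2]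

lemma one_le_integral_of_ae_one_le_le [IsProbabilityMeasure μ] (hX : AEStronglyMeasurable X μ)
    (hb : ∀ᵐ ω ∂μ, 1 ≤ X ω ∧ X ω ≤ M) : 1 ≤ ∫ ω, X ω ∂μ := by
  simpa using integral_mono_ae (integrable_const 1) (integrable_of_ae_one_le_le hX hb)
    (hb.mono fun _ h ↦ h.1)

lemma log_integral_div_le_integral_log [IsProbabilityMeasure μ] (hX : AEStronglyMeasurable X μ)
    (hb : ∀ᵐ ω ∂μ, 1 ≤ X ω ∧ X ω ≤ M) : log (∫ ω, X ω ∂μ) / M ≤ ∫ ω, log (X ω) ∂μ := by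
  have hXint := integrable_of_ae_one_le_le hX hb
  have hM : 0 ≤ M := by
    obtain ⟨ω, h⟩ := hb.exists
    linarith [h.1, h.2]
  calc log (∫ ω, X ω ∂μ) / M ≤ (∫ ω, X ω ∂μ - 1) / M :=
        div_le_div_of_nonneg_right
          (log_le_sub_one_of_pos (by linarith [one_le_integral_of_ae_one_le_le hX hb])) hM
    _ = ∫ ω, (X ω - 1) / M ∂μ := by
        rw [integral_div, integral_sub hXint (integrable_const 1)]
        simp
    _ ≤ ∫ ω, log (X ω) ∂μ :=
        integral_mono_ae ((hXint.sub (integrable_const 1)).div_const M)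
          (integrable_log_of_ae_one_le_le hX hb) (hb.mono fun _ h ↦ sub_one_div_le_log_s1 h.1 h.2)

lemma integrable_prod_of_ae_one_le_le [IsFiniteMeasure μ] {ι : Type*} [Fintype ι]
    {X : ι → Ω → ℝ} (hX : ∀ i, AEStronglyMeasurable (X i) μ)
    (hb : ∀ i, ∀ᵐ ω ∂μ, 1 ≤ X i ω ∧ X i ω ≤ M) : Integrable (fun ω ↦ ∏ i, X i ω) μ :=
  .of_bound (Finset.aestronglyMeasurable_fun_prod _ fun i _ ↦ hX i) (M ^ Fintype.card ι) <|
    (Filter.eventually_all.2 hb).mono fun ω h ↦ by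
      rw [norm_eq_abs, abs_of_nonneg (Finset.prod_nonneg fun i _ ↦ by linarith [(h i).1]),
        ← Finset.card_univ, ← Finset.prod_const]
      exact Finset.prod_le_prod (fun i _ ↦ by linarith [(h i).1]) fun i _ ↦ (h i).2

end BoundedAboveOne

end MeasureTheory

open MeasureTheory

theorem bar_product_expectation_lower_above_one_general
    {Ω : Type*} [MeasurableSpace Ω] (μ : Measure Ω) [IsProbabilityMeasure μ]
    (p : ℕ) (Z : Fin p → Ω → ℝ) (zmax : ℝ)
    (hmeas : ∀ i, Measurable (Z i))
    (hbound : ∀ i, ∀ᵐ ω ∂μ, 1 ≤ Z i ω ∧ Z i ω ≤ zmax) :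
    (∏ i, ∫ ω, Z i ω ∂μ) ^ ((1 : ℝ) / zmax) ≤ ∫ ω, ∏ i, Z i ω ∂μ := by
  have hZ i : AEStronglyMeasurable (Z i) μ := (hmeas i).aestronglyMeasurable
  have hmean_pos i : 0 < ∫ ω, Z i ω ∂μ := by
    linarith [one_le_integral_of_ae_one_le_le (hZ i) (hbound i)]
  calc (∏ i, ∫ ω, Z i ω ∂μ) ^ ((1 : ℝ) / zmax)
        = Real.exp (∑ i, Real.log (∫ ω, Z i ω ∂μ) / zmax) := by
        rw [Real.rpow_def_of_pos (Finset.prod_pos fun i _ ↦ hmean_pos i),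
          Real.log_prod fun i _ ↦ (hmean_pos i).ne', mul_one_div, Finset.sum_div]
    _ ≤ Real.exp (∑ i, ∫ ω, Real.log (Z i ω) ∂μ) := Real.exp_le_exp.2 <|
        Finset.sum_le_sum fun i _ ↦ log_integral_div_le_integral_log (hZ i) (hbound i)
    _ ≤ ∫ ω, ∏ i, Z i ω ∂μ :=
        exp_sum_integral_log_le_integral_prod
          (fun i ↦ (hbound i).mono fun _ h ↦ by linarith [h.1])
          (fun i ↦ integrable_log_of_ae_one_le_le (hZ i) (hbound i))
          (integrable_prod_of_ae_one_le_le hZ hbound)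

/-- If `Z 1, ..., Z p` are random variables on a probability space with
`1 ≤ Z i ≤ zmax` almost surely (`zmax ≥ 1`), then
`E[∏ Z i] ≥ (∏ E[Z i]) ^ (1/zmax)`. -/
theorem bar_product_expectation_lower_above_one
    {Ω : Type*} [MeasurableSpace Ω] (μ : Measure Ω) [IsProbabilityMeasure μ]
    (p : ℕ) (Z : Fin p → Ω → ℝ) (zmax : ℝ)
    (hzmax : 1 ≤ zmax)
    (hmeas : ∀ i, Measurable (Z i))
    (hbound : ∀ i, ∀ᵐ ω ∂μ, 1 ≤ Z i ω ∧ Z i ω ≤ zmax) :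
    (∏ i, ∫ ω, Z i ω ∂μ) ^ ((1 : ℝ) / zmax) ≤ ∫ ω, ∏ i, Z i ω ∂μ :=
  bar_product_expectation_lower_above_one_general μ p Z zmax hmeas hbound
end

section
/- Let Z_1,...,Z_p be random variables such that Z_1,...,Z_k take values in [z_min,1] almost surely (with 0 < z_min < 1) and Z_{k+1},...,Z_p take values in [1,z_max] almost surely (with z_max ≥ 1). Then E[∏_{i=1}^p Z_i] ≥ (∏_{i=1}^k E[Z_i])^{1/z_min} · (∏_{i=k+1}^p E[Z_i])^{1/z_max}. -/
/-!
For `z` between `1` and `c > 0` one has `exp ((z - 1) / c) ≤ z`, so with `cᵢ = zmin` or `zmax`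
the product `∏ Zᵢ` dominates `exp (∑ (Zᵢ - 1) / cᵢ)`. Jensen's inequality for `exp` moves the
expectation inside the exponential, and `log x ≤ x - 1` gives
`exp ((E Zᵢ - 1) / cᵢ) ≥ (E Zᵢ) ^ (1 / cᵢ)`.
-/

open MeasureTheory Real Set

lemma pos_of_mem_uIcc_one {c z : ℝ} (hc : 0 < c) (hz : z ∈ uIcc 1 c) : 0 < z :=
  (lt_min one_pos hc).trans_le hz.1

lemma exp_sub_one_div_le_of_mem_uIcc {c z : ℝ} (hc : 0 < c) (hz : z ∈ uIcc 1 c) :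
    exp ((z - 1) / c) ≤ z := by
  obtain ⟨hbetween, hlt⟩ : 0 ≤ (z - 1) * (c - z) ∧ z < 1 + c := by
    rcases mem_uIcc.1 hz with ⟨h1, h2⟩ | ⟨h1, h2⟩ <;> constructor <;> nlinarith
  set u := (z - 1) / c with hu
  have hu1 : 0 < 1 - u := by rw [sub_pos, div_lt_one hc]; linarith
  have hexp : exp u * (1 - u) ≤ 1 :=
    calc exp u * (1 - u) ≤ exp u * exp (-u) := by gcongr; linarith [add_one_le_exp (-u)]
      _ = 1 := by rw [← exp_add, add_neg_cancel, exp_zero]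
  have hz1 : 1 ≤ z * (1 - u) := by
    rw [hu, one_sub_div hc.ne', mul_div_assoc', le_div_iff₀ hc]
    nlinarith
  exact le_of_mul_le_mul_right (hexp.trans hz1) hu1

lemma rpow_one_div_le_exp_sub_one_div {c x : ℝ} (hc : 0 < c) (hx : 0 < x) :
    x ^ (1 / c) ≤ exp ((x - 1) / c) := by
  rw [rpow_def_of_pos hx, mul_one_div]
  gcongr
  exact log_le_sub_one_of_pos hx

section

variable {Ω : Type*} [MeasurableSpace Ω] {μ : Measure Ω} {X : Ω → ℝ} {c : ℝ}

lemma integrable_of_ae_mem_uIcc [IsFiniteMeasure μ] {a b : ℝ} (hX : AEMeasurable X μ)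
    (h : ∀ᵐ ω ∂μ, X ω ∈ uIcc a b) : Integrable X μ :=
  .of_mem_Icc _ _ hX h

lemma integral_pos_of_ae_mem_uIcc_one [IsProbabilityMeasure μ] (hc : 0 < c)
    (hX : AEMeasurable X μ) (h : ∀ᵐ ω ∂μ, X ω ∈ uIcc 1 c) : 0 < ∫ ω, X ω ∂μ := by
  have hmin : min 1 c ≤ ∫ ω, X ω ∂μ := by
    simpa using integral_mono_ae (integrable_const (min 1 c))
      (integrable_of_ae_mem_uIcc hX h) (h.mono fun ω hω => hω.1)
  exact (lt_min one_pos hc).trans_le hmin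

end

open Finset in
theorem prod_integral_rpow_one_div_le_integral_prod {Ω ι : Type*} [MeasurableSpace Ω]
    {μ : Measure Ω} [IsProbabilityMeasure μ] [Fintype ι] {Z : ι → Ω → ℝ} {c : ι → ℝ}
    (hc : ∀ i, 0 < c i) (hZ : ∀ i, AEMeasurable (Z i) μ)
    (hZc : ∀ i, ∀ᵐ ω ∂μ, Z i ω ∈ uIcc 1 (c i)) :
    ∏ i, (∫ ω, Z i ω ∂μ) ^ (1 / c i) ≤ ∫ ω, ∏ i, Z i ω ∂μ := by
  have hint i : Integrable (Z i) μ := integrable_of_ae_mem_uIcc (hZ i) (hZc i)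
  have hE i : 0 < ∫ ω, Z i ω ∂μ := integral_pos_of_ae_mem_uIcc_one (hc i) (hZ i) (hZc i)
  have hall : ∀ᵐ ω ∂μ, ∀ i, Z i ω ∈ uIcc 1 (c i) := ae_all_iff.2 hZc
  have hZpos : ∀ᵐ ω ∂μ, ∀ i, 0 < Z i ω :=
    hall.mono fun ω hω i => pos_of_mem_uIcc_one (hc i) (hω i)
  have hterm i : Integrable (fun ω => (Z i ω - 1) / c i) μ :=
    ((hint i).sub (integrable_const 1)).div_const _
  set S : Ω → ℝ := fun ω => ∑ i, (Z i ω - 1) / c i with hS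
  have hS_int : Integrable S μ := integrable_finsetSum _ fun i _ => hterm i
  have hexpS_le : ∀ᵐ ω ∂μ, exp (S ω) ≤ ∏ i, Z i ω := by
    filter_upwards [hall] with ω hω
    rw [hS, exp_sum]
    exact prod_le_prod (fun _ _ => (exp_pos _).le)
      fun i _ => exp_sub_one_div_le_of_mem_uIcc (hc i) (hω i)
  have hprod_int : Integrable (fun ω => ∏ i, Z i ω) μ := by
    refine .of_mem_Icc 0 (∏ i, max 1 (c i)) (aemeasurable_fun_prod _ fun i _ => hZ i) ?_
    filter_upwards [hall, hZpos] with ω hω hpos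
    exact ⟨prod_nonneg fun i _ => (hpos i).le,
      prod_le_prod (fun i _ => (hpos i).le) fun i _ => (hω i).2⟩
  have hexpS_int : Integrable (fun ω => exp (S ω)) μ := by
    refine hprod_int.mono' hS_int.aemeasurable.exp.aestronglyMeasurable ?_
    filter_upwards [hexpS_le] with ω hω
    rwa [norm_of_nonneg (exp_pos _).le]
  calc ∏ i, (∫ ω, Z i ω ∂μ) ^ (1 / c i)
      ≤ ∏ i, exp ((∫ ω, Z i ω ∂μ - 1) / c i) :=
        prod_le_prod (fun i _ => (rpow_pos_of_pos (hE i) _).le)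
          fun i _ => rpow_one_div_le_exp_sub_one_div (hc i) (hE i)
    _ = exp (∫ ω, S ω ∂μ) := by
        simp only [hS]
        rw [← exp_sum, integral_finsetSum _ fun i _ => hterm i]
        simp only [integral_div, integral_sub (hint _) (integrable_const 1), integral_const,
          probReal_univ, one_smul]
    _ ≤ ∫ ω, exp (S ω) ∂μ :=
        convexOn_exp.map_integral_le continuous_exp.continuousOn isClosed_univ
          (.of_forall fun _ => mem_univ _) hS_int hexpS_int
    _ ≤ ∫ ω, ∏ i, Z i ω ∂μ := integral_mono_ae hexpS_int hprod_int hexpS_le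

open Finset in
theorem bar_product_expectation_lower_mixed_general
    {Ω : Type*} [MeasurableSpace Ω] (μ : Measure Ω) [IsProbabilityMeasure μ]
    (p k : ℕ) (Z : Fin p → Ω → ℝ) (zmin zmax : ℝ)
    (hzmin : 0 < zmin) (hzmax : 1 ≤ zmax)
    (hmeas : ∀ i, Measurable (Z i))
    (hlow : ∀ i : Fin p, (i : ℕ) < k → ∀ᵐ ω ∂μ, zmin ≤ Z i ω ∧ Z i ω ≤ 1)
    (hhigh : ∀ i : Fin p, k ≤ (i : ℕ) → ∀ᵐ ω ∂μ, 1 ≤ Z i ω ∧ Z i ω ≤ zmax) :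
    (∏ i ∈ Finset.univ.filter (fun i : Fin p => (i : ℕ) < k), ∫ ω, Z i ω ∂μ) ^ ((1 : ℝ) / zmin) *
      (∏ i ∈ Finset.univ.filter (fun i : Fin p => k ≤ (i : ℕ)), ∫ ω, Z i ω ∂μ) ^ ((1 : ℝ) / zmax)
      ≤ ∫ ω, ∏ i, Z i ω ∂μ := by
  set c : Fin p → ℝ := fun i => if (i : ℕ) < k then zmin else zmax
  have hc_low {i : Fin p} (h : (i : ℕ) < k) : c i = zmin := if_pos h
  have hc_high {i : Fin p} (h : k ≤ (i : ℕ)) : c i = zmax := if_neg (not_lt.2 h)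
  have hc i : 0 < c i := by
    rcases lt_or_ge (i : ℕ) k with h | h
    · rwa [hc_low h]
    · rw [hc_high h]; linarith
  have hZc i : ∀ᵐ ω ∂μ, Z i ω ∈ uIcc 1 (c i) := by
    rcases lt_or_ge (i : ℕ) k with h | h
    · filter_upwards [hlow i h] with ω hω
      exact hc_low h ▸ mem_uIcc.2 (Or.inr hω)
    · filter_upwards [hhigh i h] with ω hω
      exact hc_high h ▸ mem_uIcc.2 (Or.inl hω)
  have hE i : 0 ≤ ∫ ω, Z i ω ∂μ :=
    (integral_pos_of_ae_mem_uIcc_one (hc i) (hmeas i).aemeasurable (hZc i)).le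
  calc _ = ∏ i, (∫ ω, Z i ω ∂μ) ^ (1 / c i) := by
        rw [← prod_filter_mul_prod_filter_not univ (fun i : Fin p => (i : ℕ) < k)]
        simp only [not_lt]
        rw [← Real.finsetProd_rpow _ _ fun i _ => hE i, ← Real.finsetProd_rpow _ _ fun i _ => hE i]
        congr 1 <;> refine prod_congr rfl fun i hi => ?_
        · rw [hc_low (mem_filter.1 hi).2]
        · rw [hc_high (mem_filter.1 hi).2]
    _ ≤ _ := prod_integral_rpow_one_div_le_integral_prod hc (fun i => (hmeas i).aemeasurable) hZc

/-- Mixed case: `Z i` for `i < k` lies a.s. in `[zmin,1]` and `Z i` for `i ≥ k`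
lies a.s. in `[1,zmax]`. Then
`E[∏ Z i] ≥ (∏_{i<k} E[Z i])^(1/zmin) · (∏_{i≥k} E[Z i])^(1/zmax)`. -/
theorem bar_product_expectation_lower_mixed
    {Ω : Type*} [MeasurableSpace Ω] (μ : Measure Ω) [IsProbabilityMeasure μ]
    (p k : ℕ) (hk : k ≤ p) (Z : Fin p → Ω → ℝ) (zmin zmax : ℝ)
    (hzmin : 0 < zmin) (hzmin1 : zmin < 1) (hzmax : 1 ≤ zmax)
    (hmeas : ∀ i, Measurable (Z i))
    (hlow : ∀ i : Fin p, (i : ℕ) < k → ∀ᵐ ω ∂μ, zmin ≤ Z i ω ∧ Z i ω ≤ 1)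
    (hhigh : ∀ i : Fin p, k ≤ (i : ℕ) → ∀ᵐ ω ∂μ, 1 ≤ Z i ω ∧ Z i ω ≤ zmax) :
    (∏ i ∈ Finset.univ.filter (fun i : Fin p => (i : ℕ) < k), ∫ ω, Z i ω ∂μ) ^ ((1 : ℝ) / zmin) *
      (∏ i ∈ Finset.univ.filter (fun i : Fin p => k ≤ (i : ℕ)), ∫ ω, Z i ω ∂μ) ^ ((1 : ℝ) / zmax)
      ≤ ∫ ω, ∏ i, Z i ω ∂μ :=
  bar_product_expectation_lower_mixed_general μ p k Z zmin zmax hzmin hzmax hmeas hlow hhigh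
end
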